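/- Let λ be a real number with λ < −1 or λ > 1/3. Then there exists a constant C > 0 (depending only on λ) such that every sequence y : ℕ → ℝ satisfying the homogeneous ZeroSNet recurrence y(n+3) = α₀(λ)·y(n+2) + α₁(λ)·y(n+1) + α₂(λ)·y(n) for all n ∈ ℕ is bounded with |y(n)| ≤ C·max{|y(0)|, |y(1)|, |y(2)|} for all n ∈ ℕ. -/

import Mathlib

/-- ZeroSNet coefficient α₀(λ) = 3(1+λ)/(4λ). -/
noncomputable def zerosAlpha0 (l : ℝ) : ℝ := 3 * (1 + l) / (4 * l)

/-- ZeroSNet coefficient α₁(λ) = −1/λ. -/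
noncomputable def zerosAlpha1 (l : ℝ) : ℝ := -1 / l

/-- ZeroSNet coefficient α₂(λ) = (1+λ)/(4λ). -/
noncomputable def zerosAlpha2 (l : ℝ) : ℝ := (1 + l) / (4 * l)

/-!
Since `α₀ + α₁ + α₂ = 1`, the first differences `d n = y (n + 1) - y n` solve the two-term
recurrence `d (n + 2) = p * d (n + 1) + q * d n` with `p = α₀ - 1` and `q = -α₂`. In the stated
range of `λ` both roots of `x ^ 2 = p * x + q` lie in the open unit disc, so `d` decays
geometrically, uniformly in its initial values, and `y n = y 0 + ∑ k < n, d k` stays bounded.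
For `λ < -1` the roots are real and `|p| + |q| < 1`, so `|d n| ≤ C ρ ^ n` for any `ρ < 1` with
`|p| ρ + |q| ≤ ρ ^ 2`.
For `λ > 1/3` the roots are complex conjugates of modulus `√(-q) < 1`, and the decay is read off
a positive definite quadratic form of `(d n, d (n + 1))` that is multiplied by `-q` at each step.
-/

open Finset

lemma norm_le_of_norm_sub_le_geometric {E : Type*} [SeminormedAddCommGroup E] {y : ℕ → E}
    {B ρ : ℝ} (hρ₀ : 0 ≤ ρ) (hρ₁ : ρ < 1) (hy : ∀ n, ‖y (n + 1) - y n‖ ≤ B * ρ ^ n) (n : ℕ) :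
    ‖y n‖ ≤ ‖y 0‖ + B / (1 - ρ) := by
  have hB : 0 ≤ B := by simpa using (norm_nonneg _).trans (hy 0)
  have hgeom : ∑ k ∈ range n, ρ ^ k ≤ 1 / (1 - ρ) := by
    simpa using geom_sum_Ico_le_of_lt_one (m := 0) (n := n) hρ₀ hρ₁
  calc ‖y n‖ = ‖y 0 + ∑ k ∈ range n, (y (k + 1) - y k)‖ := by rw [← eq_sum_range_sub]
    _ ≤ ‖y 0‖ + ∑ k ∈ range n, ‖y (k + 1) - y k‖ :=
      (norm_add_le _ _).trans (by gcongr; exact norm_sum_le _ _)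
    _ ≤ ‖y 0‖ + ∑ k ∈ range n, B * ρ ^ k := by gcongr with k; exact hy k
    _ ≤ ‖y 0‖ + B * (1 / (1 - ρ)) := by rw [← mul_sum]; gcongr
    _ = ‖y 0‖ + B / (1 - ρ) := by ring

lemma sub_recurrence_of_add_add_eq_one {y : ℕ → ℝ} {a b c : ℝ} (habc : a + b + c = 1)
    (hy : ∀ n, y (n + 3) = a * y (n + 2) + b * y (n + 1) + c * y n) (n : ℕ) :
    y (n + 3) - y (n + 2) = (a - 1) * (y (n + 2) - y (n + 1)) + -c * (y (n + 1) - y n) := by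
  rw [hy n, show b = 1 - a - c by linarith]
  ring

def DecaysGeometrically (p q : ℝ) : Prop :=
  ∃ A ρ : ℝ, 0 ≤ A ∧ 0 ≤ ρ ∧ ρ < 1 ∧ ∀ d : ℕ → ℝ, (∀ n, d (n + 2) = p * d (n + 1) + q * d n) →
    ∀ n, |d n| ≤ A * max |d 0| |d 1| * ρ ^ n

section SecondOrder

variable {p q : ℝ} {d : ℕ → ℝ}

lemma abs_le_mul_pow_of_recurrence {ρ M : ℝ} (hρ₀ : 0 ≤ ρ) (hρ : |p| * ρ + |q| ≤ ρ ^ 2)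
    (hd : ∀ n, d (n + 2) = p * d (n + 1) + q * d n) (h₀ : |d 0| ≤ M) (h₁ : |d 1| ≤ M * ρ) :
    ∀ n, |d n| ≤ M * ρ ^ n := by
  have hM : 0 ≤ M := (abs_nonneg _).trans h₀
  intro n
  induction n using Nat.twoStepInduction with
  | zero => simpa using h₀
  | one => simpa using h₁
  | more n ih₀ ih₁ =>
    calc |d (n + 2)| ≤ |p| * |d (n + 1)| + |q| * |d n| := by
          rw [hd n, ← abs_mul, ← abs_mul]; exact abs_add_le _ _
      _ ≤ |p| * (M * ρ ^ (n + 1)) + |q| * (M * ρ ^ n) := by gcongr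
      _ = M * ρ ^ n * (|p| * ρ + |q|) := by ring
      _ ≤ M * ρ ^ n * ρ ^ 2 := by gcongr
      _ = M * ρ ^ (n + 2) := by ring

lemma decaysGeometrically_of_abs_add_abs_lt_one (h : |p| + |q| < 1) : DecaysGeometrically p q := by
  set ρ := (1 + |p| + |q|) / 2 with hρ_def
  have hρ₀ : 0 < ρ := by positivity
  have hρ : |p| * ρ + |q| ≤ ρ ^ 2 := by
    have hfactor : ρ ^ 2 - (|p| * ρ + |q|) = (1 - |p| - |q|) * (1 + |p| - |q|) / 4 := by
      rw [hρ_def]; ring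
    have : 0 < (1 - |p| - |q|) * (1 + |p| - |q|) := by
      apply mul_pos <;> linarith [abs_nonneg p]
    linarith
  have hρ₁ : ρ < 1 := by linarith
  refine ⟨ρ⁻¹, ρ, by positivity, hρ₀.le, hρ₁, fun d hd n => ?_⟩
  rw [mul_comm ρ⁻¹]
  refine abs_le_mul_pow_of_recurrence hρ₀.le hρ hd ?_ ?_ n
  · calc |d 0| ≤ max |d 0| |d 1| := le_max_left _ _
      _ ≤ max |d 0| |d 1| * ρ⁻¹ := le_mul_of_one_le_right (by positivity)
          ((one_le_inv₀ hρ₀).2 hρ₁.le)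
  · rw [inv_mul_cancel_right₀ hρ₀.ne']
    exact le_max_right _ _

/-- When the roots `r`, `r̄` of `x ^ 2 = p * x + q` are complex, this is `|v - r * u| ^ 2`. -/
def recurrenceForm (p q u v : ℝ) : ℝ := v ^ 2 - p * u * v - q * u ^ 2

lemma recurrenceForm_succ (hd : ∀ n, d (n + 2) = p * d (n + 1) + q * d n) (n : ℕ) :
    recurrenceForm p q (d (n + 1)) (d (n + 2)) = -q * recurrenceForm p q (d n) (d (n + 1)) := by
  rw [recurrenceForm, recurrenceForm, hd n]
  ring

lemma recurrenceForm_eq_pow_mul (hd : ∀ n, d (n + 2) = p * d (n + 1) + q * d n) (n : ℕ) :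
    recurrenceForm p q (d n) (d (n + 1)) = (-q) ^ n * recurrenceForm p q (d 0) (d 1) := by
  induction n with
  | zero => simp
  | succ n ih => rw [recurrenceForm_succ hd, ih, pow_succ]; ring

lemma mul_sq_le_recurrenceForm (p q u v : ℝ) :
    (-q - p ^ 2 / 4) * u ^ 2 ≤ recurrenceForm p q u v := by
  rw [recurrenceForm]
  nlinarith [sq_nonneg (v - p / 2 * u)]

lemma recurrenceForm_le (p q u v : ℝ) :
    recurrenceForm p q u v ≤ (1 + |p| + |q|) * max |u| |v| ^ 2 := by
  set m := max |u| |v|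
  have hu : |u| ≤ m := le_max_left _ _
  have hv : |v| ≤ m := le_max_right _ _
  have hv2 : v ^ 2 ≤ m ^ 2 := by rw [← sq_abs]; gcongr
  have huv : -(p * u * v) ≤ |p| * m ^ 2 :=
    (neg_le_abs _).trans (by rw [abs_mul, abs_mul, mul_assoc, sq]; gcongr)
  have hu2 : -(q * u ^ 2) ≤ |q| * m ^ 2 :=
    (neg_le_abs _).trans (by rw [abs_mul, abs_pow]; gcongr)
  rw [recurrenceForm]
  linarith

lemma decaysGeometrically_of_discrim_neg (hdisc : p ^ 2 + 4 * q < 0) (hq : -1 < q) :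
    DecaysGeometrically p q := by
  have hc : 0 < -q - p ^ 2 / 4 := by linarith
  have hq₀ : 0 ≤ -q := by nlinarith [sq_nonneg p]
  set K := (1 + |p| + |q|) / (-q - p ^ 2 / 4)
  have hcK : (-q - p ^ 2 / 4) * K = 1 + |p| + |q| := mul_div_cancel₀ _ hc.ne'
  refine ⟨√K, √(-q), by positivity, by positivity, by rw [Real.sqrt_lt' one_pos]; linarith,
    fun d hd n => abs_le_of_sq_le_sq ?_ (by positivity)⟩
  set m := max |d 0| |d 1|
  have hsq : (-q - p ^ 2 / 4) * d n ^ 2 ≤ (-q - p ^ 2 / 4) * (K * m ^ 2 * (-q) ^ n) :=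
    calc (-q - p ^ 2 / 4) * d n ^ 2 ≤ recurrenceForm p q (d n) (d (n + 1)) :=
          mul_sq_le_recurrenceForm ..
      _ = (-q) ^ n * recurrenceForm p q (d 0) (d 1) := recurrenceForm_eq_pow_mul hd n
      _ ≤ (-q) ^ n * ((1 + |p| + |q|) * m ^ 2) := by gcongr; exact recurrenceForm_le ..
      _ = (-q - p ^ 2 / 4) * (K * m ^ 2 * (-q) ^ n) := by
        linear_combination -(m ^ 2 * (-q) ^ n) * hcK
  rw [mul_pow, mul_pow, ← pow_mul, mul_comm n, pow_mul, Real.sq_sqrt, Real.sq_sqrt hq₀]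
  · exact le_of_mul_le_mul_left hsq hc
  · positivity

end SecondOrder

section ZeroSNet

variable {l : ℝ}

lemma zerosAlpha0_add_zerosAlpha1_add_zerosAlpha2 (hl : l ≠ 0) :
    zerosAlpha0 l + zerosAlpha1 l + zerosAlpha2 l = 1 := by
  unfold zerosAlpha0 zerosAlpha1 zerosAlpha2
  field_simp
  ring

lemma zerosAlpha0_sub_one (hl : l ≠ 0) : zerosAlpha0 l - 1 = (3 - l) / (4 * l) := by
  unfold zerosAlpha0
  field_simp
  ring

lemma abs_zerosAlpha0_sub_one_add_abs_neg_zerosAlpha2_lt_one (hl : l < -1) :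
    |zerosAlpha0 l - 1| + |-zerosAlpha2 l| < 1 := by
  have h4l : 4 * l < 0 := by linarith
  rw [zerosAlpha0_sub_one (by linarith : l < 0).ne, abs_neg, zerosAlpha2,
    abs_of_neg (div_neg_of_pos_of_neg (by linarith) h4l),
    abs_of_pos (div_pos_of_neg_of_neg (by linarith) h4l), neg_add_eq_sub,
    div_sub_div_same, div_lt_one_of_neg h4l]
  linarith

lemma zerosAlpha_discrim_neg (hl : 1 / 3 < l) :
    (zerosAlpha0 l - 1) ^ 2 + 4 * -zerosAlpha2 l < 0 := by
  have hl₀ : 0 < l := by linarith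
  have h : (zerosAlpha0 l - 1) ^ 2 + 4 * -zerosAlpha2 l =
      -((3 * l - 1) * (5 * l + 9)) / (16 * l ^ 2) := by
    rw [zerosAlpha0_sub_one hl₀.ne', zerosAlpha2]
    field_simp
    ring
  rw [h]
  exact div_neg_of_neg_of_pos (neg_neg_of_pos (by nlinarith)) (by positivity)

lemma zerosAlpha2_lt_one (hl : 1 / 3 < l) : zerosAlpha2 l < 1 := by
  rw [zerosAlpha2, div_lt_one (by linarith)]
  linarith

lemma decaysGeometrically_zerosAlpha (hl : l < -1 ∨ 1 / 3 < l) :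
    DecaysGeometrically (zerosAlpha0 l - 1) (-zerosAlpha2 l) := by
  rcases hl with hl | hl
  · exact decaysGeometrically_of_abs_add_abs_lt_one
      (abs_zerosAlpha0_sub_one_add_abs_neg_zerosAlpha2_lt_one hl)
  · exact decaysGeometrically_of_discrim_neg (zerosAlpha_discrim_neg hl)
      (neg_lt_neg (zerosAlpha2_lt_one hl))

end ZeroSNet

/-- Zero stability of the homogeneous ZeroSNet recurrence: for λ in the zero-stability
region (`λ < −1` or `λ > 1/3`), there is a constant `C > 0` such that every sequence
satisfying `y(n+3) = α₀(λ)y(n+2) + α₁(λ)y(n+1) + α₂(λ)y(n)` is bounded by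
`C·max{|y 0|, |y 1|, |y 2|}`. -/
theorem zerosnet_recurrence_bounded (l : ℝ) (hl : l < -1 ∨ 1 / 3 < l) :
    ∃ C : ℝ, 0 < C ∧ ∀ y : ℕ → ℝ,
      (∀ n : ℕ, y (n + 3) = zerosAlpha0 l * y (n + 2) + zerosAlpha1 l * y (n + 1)
        + zerosAlpha2 l * y n) →
      ∀ n : ℕ, |y n| ≤ C * max |y 0| (max |y 1| |y 2|) := by
  have hl₀ : l ≠ 0 := by rintro rfl; norm_num at hl
  obtain ⟨A, ρ, hA, hρ₀, hρ₁, hdecay⟩ := decaysGeometrically_zerosAlpha hl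
  have hρ : 0 < 1 - ρ := sub_pos.2 hρ₁
  refine ⟨1 + 2 * A / (1 - ρ), by positivity, fun y hy n => ?_⟩
  set M := max |y 0| (max |y 1| |y 2|)
  have h₀ : |y 0| ≤ M := le_max_left _ _
  have h₁ : |y 1| ≤ M := (le_max_left _ _).trans (le_max_right _ _)
  have h₂ : |y 2| ≤ M := (le_max_right _ _).trans (le_max_right _ _)
  have hinit : max |y 1 - y 0| |y 2 - y 1| ≤ 2 * M :=
    max_le ((abs_sub _ _).trans (by linarith)) ((abs_sub _ _).trans (by linarith))
  have hdiff : ∀ k, ‖y (k + 1) - y k‖ ≤ 2 * A * M * ρ ^ k := fun k =>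
    calc ‖y (k + 1) - y k‖
        ≤ A * max |y 1 - y 0| |y 2 - y 1| * ρ ^ k := hdecay (fun j => y (j + 1) - y j)
          (sub_recurrence_of_add_add_eq_one (zerosAlpha0_add_zerosAlpha1_add_zerosAlpha2 hl₀) hy)
          k
      _ ≤ A * (2 * M) * ρ ^ k := by gcongr
      _ = 2 * A * M * ρ ^ k := by ring
  calc |y n| ≤ |y 0| + 2 * A * M / (1 - ρ) := norm_le_of_norm_sub_le_geometric hρ₀ hρ₁ hdiff n
    _ ≤ M + 2 * A * M / (1 - ρ) := by gcongr
    _ = (1 + 2 * A / (1 - ρ)) * M := by ring
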